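/- arXiv:math/0107080 — 7 statements merged into one kernel-verified Lean document; each statement's English description precedes it below -/
import Mathlib

section
/- Let f(z) = Σ_{i=0}^∞ γ_i z^i be a formal power series with complex coefficients, let n, k ≥ 0, and let f_m(z) = Σ_{i=0}^m γ_i z^i denote its partial sums. Suppose P and Q are complex polynomials with deg P ≤ n+k, deg Q ≤ k, Q(0) = 1, and such that the formal power series Q(X)·(Σ_i γ_i X^i) − P(X) has vanishing coefficients in all orders ≤ n+2k (the Padé order condition, so that P/Q is the Padé approximant [n+k/k] of f). Fix z ∈ ℂ with Q(z) ≠ 0, apply Wynn's epsilon algorithm to the input sequence s_m = f_m(z) (m ≥ 0), and assume all differences ε_m^{(i+1)} − ε_m^{(i)} appearing in the computation of ε_{2k}^{(n)} are nonzero. Then ε_{2k}^{(n)} = P(z)/Q(z), i.e., the epsilon algorithm produces the Padé approximant [n+k/k]_f(z). -/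
/-- Wynn's epsilon algorithm for complex sequences, with the first index shifted by
one: `wynnEpsC s 0 n = ε₋₁⁽ⁿ⁾ = 0`, `wynnEpsC s 1 n = ε₀⁽ⁿ⁾ = sₙ`, and
`wynnEpsC s (k+2) n = ε_{k+1}⁽ⁿ⁾ = ε_{k-1}⁽ⁿ⁺¹⁾ + 1/(ε_k⁽ⁿ⁺¹⁾ - ε_k⁽ⁿ⁾)`. -/
noncomputable def wynnEpsC (s : ℕ → ℂ) : ℕ → ℕ → ℂ
  | 0, _ => 0
  | 1, n => s n
  | (k + 2), n =>
      wynnEpsC s k (n + 1) + 1 / (wynnEpsC s (k + 1) (n + 1) - wynnEpsC s (k + 1) n)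

/-!
A Padé form of type `(l, m)` is a pair `(p, q)` with `deg p ≤ l`, `deg q ≤ m` and
`q f - p = O(X^(l+m+1))`. For two forms the cross polynomial `p₁ q₂ - p₂ q₁` is divisible by a
high power of `X` but has low degree, so for neighbouring entries of the Padé table it is a
monomial (for the pair `E`, `W`: a monomial times a linear factor). Comparing the linear
relations this gives between the denominators of a star `N, W, M, E, S` of the table yields
Wynn's cross rule `1/(N - M) = 1/(E - M) + 1/(W - M) + 1/(M - S)` for the values at `z`, where
in the first column `S = (X^(l+1), 0)` plays the role of `∞`. The epsilon algorithm satisfies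
the same rule between its even columns: inverting its recursion needs no hypothesis, since
`1/(1/x) = x` also for `x = 0`. Induction on the column, starting from the partial sums,
identifies `ε_{2j}^{(i)}` with the value of a form of type `(i+j, j)`, and such values are
unique.
-/

open Polynomial

theorem Polynomial.exists_eq_mul_X_pow_of_coeff_eq_zero {R : Type*} [Semiring R] [Nontrivial R]
    {p : R[X]} {o d : ℕ} (hcoeff : ∀ t < o, p.coeff t = 0) (hdeg : p.natDegree ≤ o + d) :
    ∃ r : R[X], r.natDegree ≤ d ∧ p = r * X ^ o := by
  obtain ⟨r, rfl⟩ := X_pow_dvd_iff.mpr hcoeff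
  refine ⟨r, ?_, X_pow_mul⟩
  rcases eq_or_ne r 0 with rfl | hr
  · simp
  · rw [natDegree_X_pow_mul _ hr] at hdeg
    omega

theorem Polynomial.eq_zero_and_eq_zero_of_linear_mul_eq_zero {K : Type*} [Field K] {p : K[X]}
    {a b : K} (h : (C a * X + C b) * p = 0) (hp : p ≠ 0) : a = 0 ∧ b = 0 := by
  have h := (mul_eq_zero.mp h).resolve_right hp
  exact ⟨by simpa using congrArg (coeff · 1) h, by simpa using congrArg (coeff · 0) h⟩

namespace Pade

variable {K : Type*} [Field K]

noncomputable def remainder (γ : ℕ → K) (F : K[X] × K[X]) : PowerSeries K :=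
  (F.2 : PowerSeries K) * PowerSeries.mk γ - F.1

structure IsForm (γ : ℕ → K) (l m : ℕ) (F : K[X] × K[X]) : Prop where
  natDegree_fst_le : F.1.natDegree ≤ l
  natDegree_snd_le : F.2.natDegree ≤ m
  X_pow_dvd_remainder : PowerSeries.X ^ (l + m + 1) ∣ remainder γ F

noncomputable def cross (F G : K[X] × K[X]) : K[X] := F.1 * G.2 - G.1 * F.2

theorem cross_swap (F G : K[X] × K[X]) : cross G F = -cross F G := by
  unfold cross; ring

theorem coe_cross (γ : ℕ → K) (F G : K[X] × K[X]) :
    (cross F G : PowerSeries K) = remainder γ G * F.2 - remainder γ F * G.2 := by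
  simp only [cross, remainder, coe_sub, coe_mul]
  ring

theorem snd_mul_cross (F G M : K[X] × K[X]) :
    M.2 * cross F G = cross F M * G.2 - cross G M * F.2 := by
  unfold cross; ring

variable {γ : ℕ → K} {l₁ m₁ l₂ m₂ : ℕ} {F G : K[X] × K[X]} {z : K}

theorem IsForm.X_pow_dvd_cross (hF : IsForm γ l₁ m₁ F) (hG : IsForm γ l₂ m₂ G) {o : ℕ}
    (h₁ : o ≤ l₁ + m₁ + 1) (h₂ : o ≤ l₂ + m₂ + 1) : X ^ o ∣ cross F G := by
  have hps : PowerSeries.X ^ o ∣ (cross F G : PowerSeries K) := by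
    rw [coe_cross γ]
    exact dvd_sub (dvd_mul_of_dvd_left ((pow_dvd_pow _ h₂).trans hG.X_pow_dvd_remainder) _)
      (dvd_mul_of_dvd_left ((pow_dvd_pow _ h₁).trans hF.X_pow_dvd_remainder) _)
  refine X_pow_dvd_iff.mpr fun t ht => ?_
  rw [← coeff_coe]
  exact PowerSeries.X_pow_dvd_iff.mp hps t ht

theorem IsForm.natDegree_cross_le (hF : IsForm γ l₁ m₁ F) (hG : IsForm γ l₂ m₂ G) :
    (cross F G).natDegree ≤ max (l₁ + m₂) (l₂ + m₁) :=
  (natDegree_sub_le _ _).trans <| max_le_max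
    (natDegree_mul_le_of_le hF.natDegree_fst_le hG.natDegree_snd_le)
    (natDegree_mul_le_of_le hG.natDegree_fst_le hF.natDegree_snd_le)

theorem IsForm.exists_cross_eq_C_mul_X_pow (hF : IsForm γ l₁ m₁ F) (hG : IsForm γ l₂ m₂ G)
    {o : ℕ} (h₁ : o ≤ l₁ + m₁ + 1) (h₂ : o ≤ l₂ + m₂ + 1) (hdeg : max (l₁ + m₂) (l₂ + m₁) ≤ o) :
    ∃ c, cross F G = C c * X ^ o := by
  obtain ⟨r, hr, hFG⟩ := exists_eq_mul_X_pow_of_coeff_eq_zero (d := 0)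
    (X_pow_dvd_iff.mp (hF.X_pow_dvd_cross hG h₁ h₂)) ((hF.natDegree_cross_le hG).trans hdeg)
  exact ⟨r.coeff 0, by rw [hFG, ← eq_C_of_natDegree_le_zero hr]⟩

theorem IsForm.exists_cross_eq_linear_mul_X_pow (hF : IsForm γ l₁ m₁ F)
    (hG : IsForm γ l₂ m₂ G) {o : ℕ} (h₁ : o ≤ l₁ + m₁ + 1) (h₂ : o ≤ l₂ + m₂ + 1)
    (hdeg : max (l₁ + m₂) (l₂ + m₁) ≤ o + 1) :
    ∃ a b, cross F G = (C a * X + C b) * X ^ o := by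
  obtain ⟨r, hr, hFG⟩ := exists_eq_mul_X_pow_of_coeff_eq_zero
    (X_pow_dvd_iff.mp (hF.X_pow_dvd_cross hG h₁ h₂)) ((hF.natDegree_cross_le hG).trans hdeg)
  obtain ⟨a, b, rfl⟩ := exists_eq_X_add_C_of_natDegree_le_one hr
  exact ⟨a, b, hFG⟩

theorem IsForm.cross_eq_zero {l m : ℕ} (hF : IsForm γ l m F) (hG : IsForm γ l m G) :
    cross F G = 0 :=
  eq_zero_of_dvd_of_natDegree_lt (hF.X_pow_dvd_cross hG le_rfl le_rfl)
    (by rw [natDegree_X_pow]; have := hF.natDegree_cross_le hG; omega)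

theorem exists_isForm (γ : ℕ → K) (l m : ℕ) : ∃ F : K[X] × K[X], F.2 ≠ 0 ∧ IsForm γ l m F := by
  -- the coefficients of `q f` in degrees `l + 1, …, l + m`: `m` equations in `m + 1` unknowns
  let Φ : degreeLT K (m + 1) →ₗ[K] Fin m → K :=
    LinearMap.pi fun s => (PowerSeries.coeff (l + 1 + s)).comp <|
      (LinearMap.mulRight K (PowerSeries.mk γ)).comp <|
        (Polynomial.coeToPowerSeries.algHom K).toLinearMap.comp (degreeLT K (m + 1)).subtype
  have hker : LinearMap.ker Φ ≠ ⊥ := LinearMap.ker_ne_bot_of_finrank_lt <| by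
    rw [(degreeLTEquiv K (m + 1)).finrank_eq]; simp
  obtain ⟨⟨q, hqdeg⟩, hq, hq0⟩ := Submodule.exists_mem_ne_zero_of_ne_bot hker
  replace hq0 : q ≠ 0 := fun h => hq0 (Subtype.ext h)
  replace hqdeg : q.natDegree ≤ m :=
    Nat.lt_succ_iff.mp ((natDegree_lt_iff_degree_lt hq0).mpr (by simpa using mem_degreeLT.mp hqdeg))
  refine ⟨(PowerSeries.trunc (l + 1) ((q : PowerSeries K) * PowerSeries.mk γ), q),
    hq0, ⟨Nat.lt_succ_iff.mp (PowerSeries.natDegree_trunc_lt _ l), hqdeg, ?_⟩⟩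
  refine PowerSeries.X_pow_dvd_iff.mpr fun t ht => ?_
  simp only [remainder, map_sub, coeff_coe, PowerSeries.coeff_trunc]
  split_ifs with htl
  · exact sub_self _
  · have hcoeff := congrFun hq ⟨t - (l + 1), by omega⟩
    simp only [Φ, LinearMap.pi_apply, LinearMap.comp_apply] at hcoeff
    rw [show l + 1 + (t - (l + 1)) = t by omega] at hcoeff
    simpa using hcoeff

theorem isForm_trunc (γ : ℕ → K) (i : ℕ) :
    IsForm γ i 0 (PowerSeries.trunc (i + 1) (PowerSeries.mk γ), 1) where
  natDegree_fst_le := Nat.lt_succ_iff.mp (PowerSeries.natDegree_trunc_lt _ i)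
  natDegree_snd_le := by simp
  X_pow_dvd_remainder := PowerSeries.X_pow_dvd_iff.mpr fun t ht => by
    simp [remainder, PowerSeries.coeff_trunc, ht]

noncomputable def value (z : K) (F : K[X] × K[X]) : K := F.1.eval z / F.2.eval z

/-- Vanishes when `G.2 = 0`, so that `(X ^ n, 0)` behaves as the value `∞`. -/
noncomputable def recipDiff (z : K) (F G : K[X] × K[X]) : K :=
  F.2.eval z * G.2.eval z / (cross F G).eval z

theorem eval_cross (hF : F.2.eval z ≠ 0) (hG : G.2.eval z ≠ 0) :
    (cross F G).eval z = (value z F - value z G) * (F.2.eval z * G.2.eval z) := by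
  simp only [cross, value, eval_sub, eval_mul]
  field_simp

theorem recipDiff_eq_one_div (hF : F.2.eval z ≠ 0) (hG : G.2.eval z ≠ 0) :
    recipDiff z F G = 1 / (value z F - value z G) := by
  rw [recipDiff, eval_cross hF hG, div_mul_cancel_right₀ (mul_ne_zero hF hG), one_div]

theorem cross_ne_zero_of_value_ne (hF : F.2.eval z ≠ 0) (hG : G.2.eval z ≠ 0)
    (h : value z F ≠ value z G) : cross F G ≠ 0 := fun h0 => by
  have h' := eval_cross hF hG
  rw [h0, eval_zero] at h'
  exact mul_ne_zero (sub_ne_zero.mpr h) (mul_ne_zero hF hG) h'.symm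

theorem IsForm.value_eq {l m : ℕ} (hF : IsForm γ l m F) (hG : IsForm γ l m G)
    (hFz : F.2.eval z ≠ 0) (hGz : G.2.eval z ≠ 0) : value z F = value z G := by
  have h := congrArg (eval z) (hF.cross_eq_zero hG)
  rw [eval_cross hFz hGz, eval_zero] at h
  exact sub_eq_zero.mp ((mul_eq_zero.mp h).resolve_right (mul_ne_zero hFz hGz))

theorem value_trunc (γ : ℕ → K) (i : ℕ) :
    value z (PowerSeries.trunc (i + 1) (PowerSeries.mk γ), 1) =
      ∑ t ∈ Finset.range (i + 1), γ t * z ^ t := by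
  simp [value, Polynomial.eval, PowerSeries.eval₂_trunc_eq_sum_range]

theorem star_identity {N M E W S : K[X] × K[X]} {L : ℕ}
    {cN cE cW cS e aNW aES aWS b₁ b₂ : K} (hM : M.2 ≠ 0)
    (hNM : cross N M = C cN * X ^ (L + 1)) (hEM : cross E M = C cE * X ^ (L + 1))
    (hWM : cross W M = C cW * X ^ L) (hMS : cross M S = C cS * X ^ L)
    (hNE : cross N E = C e * X ^ (L + 2)) (hNW : cross N W = C aNW * X ^ L)
    (hES : cross E S = C aES * X ^ L) (hWS : cross W S = C aWS * X ^ L)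
    (hEW : cross E W = (C b₁ * X + C b₂) * X ^ L) :
    C (cE * cS * cW) * N.2 =
      C (cN * cS * cW) * E.2 + C (cN * cE * cS) * X * W.2 + C (cN * cE * cW) * X * S.2 := by
  have hX : ∀ n, (X ^ n : K[X]) ≠ 0 := fun n => pow_ne_zero n X_ne_zero
  have h₁ : C e * X * M.2 = C cN * E.2 - C cE * N.2 := mul_left_cancel₀ (hX (L + 1)) <| by
    have r := snd_mul_cross N E M; rw [hNE, hNM, hEM] at r; linear_combination r
  have h₂ : C aNW * M.2 = C cN * X * W.2 - C cW * N.2 := mul_left_cancel₀ (hX L) <| by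
    have r := snd_mul_cross N W M; rw [hNW, hNM, hWM] at r; linear_combination r
  have h₃ : C aES * M.2 = C cE * X * S.2 + C cS * E.2 := mul_left_cancel₀ (hX L) <| by
    have r := snd_mul_cross E S M; rw [hES, hEM, cross_swap, hMS] at r; linear_combination r
  have h₄ : (C b₁ * X + C b₂) * M.2 = C cE * X * W.2 - C cW * E.2 := mul_left_cancel₀ (hX L) <| by
    have r := snd_mul_cross E W M; rw [hEW, hEM, hWM] at r; linear_combination r
  have h₅ : C aWS * M.2 = C cW * S.2 + C cS * W.2 := mul_left_cancel₀ (hX L) <| by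
    have r := snd_mul_cross W S M; rw [hWS, hWM, cross_swap, hMS] at r; linear_combination r
  -- two combinations free of `N.2, E.2, W.2, S.2` leave a linear factor times `M.2 ≠ 0`;
  -- its vanishing `X`-coefficients tie `e` to `aWS`
  obtain ⟨hA, -⟩ := eq_zero_and_eq_zero_of_linear_mul_eq_zero (a := -(cN * b₁ + cW * e))
    (b := cE * aNW - cN * b₂) (by
      linear_combination (norm := (simp only [map_mul, map_sub, map_add, map_neg]; ring1))
        C cE * h₂ - C cN * h₄ - C cW * h₁) hM
  obtain ⟨hB, -⟩ := eq_zero_and_eq_zero_of_linear_mul_eq_zero (a := cS * b₁ - cE * aWS)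
    (b := cS * b₂ + cW * aES) (by
      linear_combination (norm := (simp only [map_mul, map_sub, map_add]; ring1))
        C cS * h₄ - C cE * X * h₅ + C cW * h₃) hM
  have hkey : cS * cW * e + cN * cE * aWS = 0 := by linear_combination -cS * hA - cN * hB
  linear_combination (norm := (simp only [map_mul, map_add, map_zero]; ring1))
    C cS * C cW * h₁ + C cN * C cE * X * h₅ - X * M.2 * congrArg C hkey

theorem cross_rule_of_star_identity {N M E W S : K[X] × K[X]} {L : ℕ} {cN cE cW cS : K}
    (hNM : cross N M = C cN * X ^ (L + 2)) (hEM : cross E M = C cE * X ^ (L + 2))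
    (hWM : cross W M = C cW * X ^ (L + 1)) (hMS : cross M S = C cS * X ^ (L + 1))
    (hcN : cN ≠ 0) (hcE : cE ≠ 0) (hcW : cW ≠ 0) (hcS : cS ≠ 0)
    (hstar : C (cE * cS * cW) * N.2 =
      C (cN * cS * cW) * E.2 + C (cN * cE * cS) * X * W.2 + C (cN * cE * cW) * X * S.2)
    (z : K) : recipDiff z N M = recipDiff z E M + recipDiff z W M + recipDiff z M S := by
  have h := congrArg (eval z) hstar
  simp only [eval_add, eval_mul, eval_C, eval_X] at h
  simp only [recipDiff, hNM, hEM, hWM, hMS, eval_mul, eval_C, eval_pow, eval_X]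
  rcases eq_or_ne z 0 with rfl | hz
  · simp
  · field_simp
    linear_combination (eval z M.2 * z ^ (L + 1)) * h

theorem cross_X_pow_zero (F : K[X] × K[X]) (n : ℕ) : cross F (X ^ n, 0) = -(X ^ n * F.2) := by
  simp [cross]

/-- `S` can stand below the centre `(l + 1, j)` of a star of the Padé table: the form of type
`(l + 1, j - 1)` if `j ≥ 1`, and `∞ = (X ^ (l + 1), 0)` if `j = 0`. -/
def IsSouth (γ : ℕ → K) (l j : ℕ) (S : K[X] × K[X]) : Prop :=
  ∀ a F, l ≤ a → a ≤ l + 2 → IsForm γ a j F → ∃ c, cross F S = C c * X ^ (l + j + 1)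

theorem IsForm.isSouth {l j : ℕ} {S : K[X] × K[X]} (hS : IsForm γ (l + 1) j S) :
    IsSouth γ l (j + 1) S := fun _ _ _ _ hF =>
  hF.exists_cross_eq_C_mul_X_pow hS (by omega) (by omega) (by omega)

theorem isSouth_X_pow_zero (l : ℕ) : IsSouth γ l 0 (X ^ (l + 1), 0) := fun _ F _ _ hF =>
  ⟨-F.2.coeff 0, by
    rw [cross_X_pow_zero, eq_C_of_natDegree_le_zero hF.natDegree_snd_le, coeff_C_zero, map_neg]
    ring⟩

theorem IsForm.cross_rule {l j : ℕ} {N M E W S : K[X] × K[X]}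
    (hW : IsForm γ l j W) (hM : IsForm γ (l + 1) j M) (hE : IsForm γ (l + 2) j E)
    (hN : IsForm γ (l + 1) (j + 1) N) (hS : IsSouth γ l j S) (hM0 : M.2 ≠ 0) (hN0 : N.2 ≠ 0)
    (hEM : cross E M ≠ 0) (hWM : cross W M ≠ 0) (hMS : cross M S ≠ 0) (z : K) :
    recipDiff z N M = recipDiff z E M + recipDiff z W M + recipDiff z M S := by
  obtain ⟨cN, hcN⟩ := hN.exists_cross_eq_C_mul_X_pow hM (o := l + j + 2) (by omega) (by omega)
    (by omega)
  obtain ⟨cE, hcE⟩ := hE.exists_cross_eq_C_mul_X_pow hM (o := l + j + 2) (by omega) (by omega)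
    (by omega)
  obtain ⟨cW, hcW⟩ := hW.exists_cross_eq_C_mul_X_pow hM (o := l + j + 1) (by omega) (by omega)
    (by omega)
  obtain ⟨e, he⟩ := hN.exists_cross_eq_C_mul_X_pow hE (o := l + j + 3) (by omega) (by omega)
    (by omega)
  obtain ⟨aNW, haNW⟩ := hN.exists_cross_eq_C_mul_X_pow hW (o := l + j + 1) (by omega)
    (by omega) (by omega)
  obtain ⟨b₁, b₂, hb⟩ := hE.exists_cross_eq_linear_mul_X_pow hW (o := l + j + 1) (by omega)
    (by omega) (by omega)
  obtain ⟨cS, hcS⟩ := hS _ M (by omega) (by omega) hM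
  obtain ⟨aES, haES⟩ := hS _ E (by omega) le_rfl hE
  obtain ⟨aWS, haWS⟩ := hS _ W le_rfl (by omega) hW
  have hstar := star_identity hM0 hcN hcE hcW hcS he haNW haES haWS hb
  have hcE0 : cE ≠ 0 := by rintro rfl; simp [hcE] at hEM
  have hcW0 : cW ≠ 0 := by rintro rfl; simp [hcW] at hWM
  have hcS0 : cS ≠ 0 := by rintro rfl; simp [hcS] at hMS
  have hcN0 : cN ≠ 0 := by
    rintro rfl
    simp only [zero_mul, map_zero, zero_add, mul_eq_zero, C_eq_zero] at hstar
    exact hstar.elim (fun h => h.elim (fun h => h.elim hcE0 hcS0) hcW0) hN0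
  exact cross_rule_of_star_identity hcN hcE hcW hcS hcN0 hcE0 hcW0 hcS0 hstar z

end Pade

open Pade

theorem wynnEpsC_succ_sub (s : ℕ → ℂ) (k n : ℕ) :
    wynnEpsC s (k + 1) (n + 1) - wynnEpsC s (k + 1) n =
      1 / (wynnEpsC s (k + 2) n - wynnEpsC s k (n + 1)) := by
  rw [wynnEpsC, add_sub_cancel_left, one_div_one_div]

theorem wynnEpsC_cross_rule (s : ℕ → ℂ) (c i : ℕ) :
    1 / (wynnEpsC s (c + 3) i - wynnEpsC s (c + 1) (i + 1)) =
      1 / (wynnEpsC s (c + 1) (i + 2) - wynnEpsC s (c + 1) (i + 1)) +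
      1 / (wynnEpsC s (c + 1) i - wynnEpsC s (c + 1) (i + 1)) +
      (wynnEpsC s c (i + 2) - wynnEpsC s c (i + 1)) := by
  rw [← wynnEpsC_succ_sub s (c + 1) i, wynnEpsC, wynnEpsC, ← neg_sub (wynnEpsC s (c + 1) i),
    div_neg]
  ring

theorem exists_isForm_wynnEpsC_succ {γ s : ℕ → ℂ} {z : ℂ} {l j i : ℕ} {W M E S : ℂ[X] × ℂ[X]}
    (hW : IsForm γ l j W) (hM : IsForm γ (l + 1) j M) (hE : IsForm γ (l + 2) j E)
    (hS : IsSouth γ l j S)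
    (hWz : W.2.eval z ≠ 0) (hMz : M.2.eval z ≠ 0) (hEz : E.2.eval z ≠ 0) (hMS : cross M S ≠ 0)
    (hvW : wynnEpsC s (2 * j + 1) i = value z W)
    (hvM : wynnEpsC s (2 * j + 1) (i + 1) = value z M)
    (hvE : wynnEpsC s (2 * j + 1) (i + 2) = value z E)
    (hvS : wynnEpsC s (2 * j) (i + 2) - wynnEpsC s (2 * j) (i + 1) = recipDiff z M S)
    (hdW : wynnEpsC s (2 * j + 1) (i + 1) - wynnEpsC s (2 * j + 1) i ≠ 0)
    (hdE : wynnEpsC s (2 * j + 1) (i + 2) - wynnEpsC s (2 * j + 1) (i + 1) ≠ 0)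
    (hdN : wynnEpsC s (2 * j + 2) (i + 1) - wynnEpsC s (2 * j + 2) i ≠ 0) :
    ∃ N, IsForm γ (l + 1) (j + 1) N ∧ N.2.eval z ≠ 0 ∧
      wynnEpsC s (2 * (j + 1) + 1) i = value z N := by
  obtain ⟨N, hN0, hN⟩ := exists_isForm γ (l + 1) (j + 1)
  have hEM := cross_ne_zero_of_value_ne hEz hMz (by rw [← hvE, ← hvM]; exact sub_ne_zero.mp hdE)
  have hWM := cross_ne_zero_of_value_ne hWz hMz
    (by rw [← hvW, ← hvM]; exact (sub_ne_zero.mp hdW).symm)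
  have hpade := hW.cross_rule hM hE hN hS (fun h => hMz (by simp [h])) hN0 hEM hWM hMS z
  have heps := wynnEpsC_cross_rule s (2 * j) i
  rw [hvE, hvM, hvW, hvS, ← recipDiff_eq_one_div hEz hMz, ← recipDiff_eq_one_div hWz hMz,
    ← hpade] at heps
  have hNz : N.2.eval z ≠ 0 := fun h => hdN <| by
    rw [wynnEpsC_succ_sub s (2 * j + 1) i, hvM]
    exact heps.trans (by rw [recipDiff, h, zero_mul, zero_div])
  refine ⟨N, hN, hNz, ?_⟩
  rw [recipDiff_eq_one_div hNz hMz, one_div, one_div, inv_inj, sub_left_inj] at heps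
  exact heps

theorem exists_isForm_eq_wynnEpsC {γ s : ℕ → ℂ} {z : ℂ}
    (hs : ∀ m, s m = ∑ i ∈ Finset.range (m + 1), γ i * z ^ i) {n k : ℕ}
    (hnz : ∀ m i : ℕ, m < 2 * k → n ≤ i → i + m + 1 ≤ n + 2 * k →
      wynnEpsC s (m + 1) (i + 1) - wynnEpsC s (m + 1) i ≠ 0)
    (j : ℕ) (hj : j ≤ k) (i : ℕ) (hi : n ≤ i) (hik : i + 2 * j ≤ n + 2 * k) :
    ∃ F, IsForm γ (i + j) j F ∧ F.2.eval z ≠ 0 ∧ wynnEpsC s (2 * j + 1) i = value z F := by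
  induction j using Nat.strong_induction_on generalizing i with
  | _ j ih =>
  match j with
  | 0 => exact ⟨_, isForm_trunc γ i, by simp, by rw [value_trunc, ← hs]; rfl⟩
  | j + 1 =>
    obtain ⟨W, hW, hWz, hvW⟩ := ih j (by omega) (by omega) i hi (by omega)
    obtain ⟨M, hM, hMz, hvM⟩ := ih j (by omega) (by omega) (i + 1) (by omega) (by omega)
    obtain ⟨E, hE, hEz, hvE⟩ := ih j (by omega) (by omega) (i + 2) (by omega) (by omega)
    obtain ⟨S, hS, hMS, hvS⟩ : ∃ S, IsSouth γ (i + j) j S ∧ cross M S ≠ 0 ∧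
        wynnEpsC s (2 * j) (i + 2) - wynnEpsC s (2 * j) (i + 1) = recipDiff z M S := by
      match j with
      | 0 =>
        refine ⟨_, isSouth_X_pow_zero (i + 0), ?_, ?_⟩
        · rw [cross_X_pow_zero, neg_ne_zero]
          exact mul_ne_zero (pow_ne_zero _ X_ne_zero) fun h => hMz (by simp [h])
        · simp only [recipDiff, eval_zero, mul_zero, zero_div]
          exact sub_self 0
      | j + 1 =>
        obtain ⟨S, hS, hSz, hvS⟩ := ih j (by omega) (by omega) (i + 2) (by omega) (by omega)
        have hvMS := wynnEpsC_succ_sub s (2 * j + 1) (i + 1)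
        rw [show 2 * j + 1 + 2 = 2 * (j + 1) + 1 by ring, hvM, hvS,
          ← recipDiff_eq_one_div hMz hSz] at hvMS
        refine ⟨S, IsForm.isSouth (by rwa [show i + (j + 1) + 1 = i + 2 + j by omega]),
          fun h => ?_, hvMS⟩
        exact hnz (2 * j + 1) (i + 1) (by omega) (by omega) (by omega)
          (by rw [hvMS, recipDiff, h, eval_zero, div_zero])
    exact exists_isForm_wynnEpsC_succ (l := i + j) hW (by rwa [add_right_comm] at hM)
      (by rwa [add_right_comm] at hE) hS hWz hMz hEz hMS hvW hvM hvE hvS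
      (hnz (2 * j) i (by omega) hi (by omega))
      (hnz (2 * j) (i + 1) (by omega) (by omega) (by omega))
      (hnz (2 * j + 1) i (by omega) hi (by omega))

theorem wynnEps_eq_pade_general
    (γ : ℕ → ℂ) (n k : ℕ) (P Q : Polynomial ℂ)
    (hP : P.natDegree ≤ n + k) (hQ : Q.natDegree ≤ k)
    (horder : ∀ i : ℕ, i ≤ n + 2 * k →
      (PowerSeries.coeff i)
        ((Q : PowerSeries ℂ) * PowerSeries.mk γ - (P : PowerSeries ℂ)) = 0)
    (z : ℂ) (hQz : Q.eval z ≠ 0)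
    (sm : ℕ → ℂ) (hsm : ∀ m : ℕ, sm m = ∑ i ∈ Finset.range (m + 1), γ i * z ^ i)
    (hnz : ∀ m i : ℕ, m < 2 * k → n ≤ i → i + m + 1 ≤ n + 2 * k →
      wynnEpsC sm (m + 1) (i + 1) - wynnEpsC sm (m + 1) i ≠ 0) :
    wynnEpsC sm (2 * k + 1) n = P.eval z / Q.eval z := by
  have hPQ : IsForm γ (n + k) k (P, Q) :=
    ⟨hP, hQ, PowerSeries.X_pow_dvd_iff.mpr fun t ht => horder t (by omega)⟩
  obtain ⟨F, hF, hFz, hvF⟩ := exists_isForm_eq_wynnEpsC hsm hnz k le_rfl n le_rfl (by omega)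
  rw [hvF]
  exact hF.value_eq hPQ hFz hQz

/-- applied to the partial sums `f_m(z) = Σ_{i=0}^m γ_i z^i` of a power
series, Wynn's epsilon algorithm produces the Padé approximants:
`ε_{2k}⁽ⁿ⁾ = [n+k/k]_f(z) = P(z)/Q(z)`, where `P/Q` satisfies the Padé order
condition of the approximant `[n+k/k]`, provided `Q(z) ≠ 0` and all differences
appearing in the computation of `ε_{2k}⁽ⁿ⁾` are nonzero.
(In `wynnEpsC`, the mathematical entry `ε_m⁽ⁱ⁾` is `wynnEpsC s (m+1) i`.) -/
theorem wynnEps_eq_pade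
    (γ : ℕ → ℂ) (n k : ℕ) (P Q : Polynomial ℂ)
    (hP : P.natDegree ≤ n + k) (hQ : Q.natDegree ≤ k) (hQ0 : Q.eval 0 = 1)
    (horder : ∀ i : ℕ, i ≤ n + 2 * k →
      (PowerSeries.coeff i)
        ((Q : PowerSeries ℂ) * PowerSeries.mk γ - (P : PowerSeries ℂ)) = 0)
    (z : ℂ) (hQz : Q.eval z ≠ 0)
    (sm : ℕ → ℂ) (hsm : ∀ m : ℕ, sm m = ∑ i ∈ Finset.range (m + 1), γ i * z ^ i)
    (hnz : ∀ m i : ℕ, m < 2 * k → n ≤ i → i + m + 1 ≤ n + 2 * k →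
      wynnEpsC sm (m + 1) (i + 1) - wynnEpsC sm (m + 1) i ≠ 0) :
    wynnEpsC sm (2 * k + 1) n = P.eval z / Q.eval z :=
  wynnEps_eq_pade_general γ n k P Q hP hQ horder z hQz sm hsm hnz
end

section
/- Let β > 0, let (s_n) be a real sequence, and take the interpolation points x_n = 1/(n+β). Then the Richardson extrapolation scheme has the closed-form expression N_k^{(n)} = (−1)^k Σ_{j=0}^k (−1)^j (β+n+j)^k / (j!·(k−j)!) · s_{n+j} for all k, n ≥ 0. -/
/-- The Richardson extrapolation scheme (Neville's scheme evaluated at `x = 0`)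
for a sequence `s` with interpolation points `x`. -/
noncomputable def richardson (s x : ℕ → ℝ) : ℕ → ℕ → ℝ
  | 0, n => s n
  | (k + 1), n =>
      (x n * richardson s x k (n + 1) - x (n + k + 1) * richardson s x k n) /
        (x n - x (n + k + 1))

lemma richardson_step (β : ℝ) (hβ : 0 < β) (s : ℕ → ℝ)
    (x : ℕ → ℝ) (hx : ∀ n : ℕ, x n = 1 / (n + β)) (k n : ℕ) :
    richardson s x (k + 1) n =
      ((β + n + k + 1) * richardson s x k (n + 1) - (β + n) * richardson s x k n) / (k + 1) := by
  have ha : (0:ℝ) < (n:ℝ) + β := by positivity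
  have hb : (0:ℝ) < ((n + k + 1 : ℕ):ℝ) + β := by positivity
  have hab : x n - x (n + k + 1) = (k + 1) / (((n:ℝ) + β) * (((n + k + 1 : ℕ):ℝ) + β)) := by
    rw [hx, hx]; push_cast; field_simp; ring
  show (x n * richardson s x k (n + 1) - x (n + k + 1) * richardson s x k n) /
        (x n - x (n + k + 1)) = _
  rw [hab, hx, hx]
  push_cast
  have hk : ((k:ℝ) + 1) ≠ 0 := by positivity
  have ha' : ((n:ℝ) + β) ≠ 0 := ne_of_gt ha
  have hb' : ((n:ℝ) + (k:ℝ) + 1 + β) ≠ 0 := by positivity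
  field_simp
  ring


/-- for the interpolation points `xₙ = 1/(n+β)` with `β > 0`, the
Richardson extrapolation scheme has the closed form
`N_k⁽ⁿ⁾ = (-1)^k Σ_{j=0}^k (-1)^j (β+n+j)^k / (j!(k-j)!) · s_{n+j}`. -/
theorem richardson_closed_form (β : ℝ) (hβ : 0 < β) (s : ℕ → ℝ)
    (x : ℕ → ℝ) (hx : ∀ n : ℕ, x n = 1 / (n + β)) :
    ∀ k n : ℕ,
      richardson s x k n =
        (-1 : ℝ) ^ k * ∑ j ∈ Finset.range (k + 1),
          (-1 : ℝ) ^ j * (β + n + j) ^ k /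
            ((Nat.factorial j : ℝ) * (Nat.factorial (k - j) : ℝ)) * s (n + j) := by
  intro k
  induction k with
  | zero =>
      intro n
      simp [richardson, Finset.sum_range_one]
  | succ k ih =>
      intro n
      rw [richardson_step β hβ s x hx k n, ih n, ih (n + 1)]
      rw [div_eq_iff (by positivity : ((k:ℝ) + 1) ≠ 0)]
      rw [Finset.sum_range_succ' (fun j => (-1 : ℝ) ^ j * (β + (n:ℝ) + j) ^ (k+1) /
            ((Nat.factorial j : ℝ) * (Nat.factorial (k + 1 - j) : ℝ)) * s (n + j)) (k+1)]
      rw [Finset.sum_range_succ (fun j => (-1 : ℝ) ^ (j+1) * (β + (n:ℝ) + (j+1:ℕ)) ^ (k+1) /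
            ((Nat.factorial (j+1) : ℝ) * (Nat.factorial (k + 1 - (j+1)) : ℝ)) * s (n + (j+1))) k]
      rw [Finset.sum_range_succ (fun j => (-1 : ℝ) ^ j * (β + ((n+1:ℕ):ℝ) + j) ^ k /
            ((Nat.factorial j : ℝ) * (Nat.factorial (k - j) : ℝ)) * s (n + 1 + j)) k]
      rw [Finset.sum_range_succ' (fun j => (-1 : ℝ) ^ j * (β + (n:ℝ) + j) ^ k /
            ((Nat.factorial j : ℝ) * (Nat.factorial (k - j) : ℝ)) * s (n + j)) k]
      -- termwise key identity
      have hkey : ∀ j ∈ Finset.range k,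
          (-1:ℝ)^(k+1) * ((-1:ℝ)^(j+1) * (β + (n:ℝ) + ((j+1:ℕ):ℝ)) ^ (k+1) /
              ((Nat.factorial (j+1) : ℝ) * (Nat.factorial (k + 1 - (j+1)) : ℝ)) * s (n + (j+1)))
            * ((k:ℝ) + 1)
          = (β + (n:ℝ) + (k:ℝ) + 1) * ((-1:ℝ)^k * ((-1:ℝ)^j * (β + ((n+1:ℕ):ℝ) + (j:ℝ)) ^ k /
              ((Nat.factorial j : ℝ) * (Nat.factorial (k - j) : ℝ)) * s (n + 1 + j)))
            - (β + (n:ℝ)) * ((-1:ℝ)^k * ((-1:ℝ)^(j+1) * (β + (n:ℝ) + ((j+1:ℕ):ℝ)) ^ k /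
              ((Nat.factorial (j+1) : ℝ) * (Nat.factorial (k - (j+1)) : ℝ)) * s (n + (j+1)))) := by
        intro j hj
        rw [Finset.mem_range] at hj
        obtain ⟨m, hm⟩ : ∃ m, k - j = m + 1 := ⟨k - j - 1, by omega⟩
        have e1 : n + (j + 1) = n + 1 + j := by omega
        have e2 : k + 1 - (j + 1) = m + 1 := by omega
        have e3 : k - (j + 1) = m := by omega
        rw [e1, e2, e3, hm]
        have hkcast : ((k:ℕ):ℝ) = (j:ℝ) + (m:ℝ) + 1 := by
          have : k = j + m + 1 := by omega
          rw [this]; push_cast; ring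
        rw [hkcast]
        have f1 : ((Nat.factorial j : ℕ):ℝ) ≠ 0 := Nat.cast_ne_zero.mpr (Nat.factorial_ne_zero j)
        have f2 : ((Nat.factorial m : ℕ):ℝ) ≠ 0 := Nat.cast_ne_zero.mpr (Nat.factorial_ne_zero m)
        simp only [Nat.factorial_succ]
        push_cast
        field_simp
        ring
      have hR : (-1:ℝ)^(k+1) * (∑ j ∈ Finset.range k,
            (-1:ℝ)^(j+1) * (β + (n:ℝ) + ((j+1:ℕ):ℝ)) ^ (k+1) /
              ((Nat.factorial (j+1) : ℝ) * (Nat.factorial (k + 1 - (j+1)) : ℝ)) * s (n + (j+1)))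
            * ((k:ℝ) + 1)
          = (β + (n:ℝ) + (k:ℝ) + 1) * ((-1:ℝ)^k * ∑ j ∈ Finset.range k,
              (-1:ℝ)^j * (β + ((n+1:ℕ):ℝ) + (j:ℝ)) ^ k /
              ((Nat.factorial j : ℝ) * (Nat.factorial (k - j) : ℝ)) * s (n + 1 + j))
            - (β + (n:ℝ)) * ((-1:ℝ)^k * ∑ j ∈ Finset.range k,
              (-1:ℝ)^(j+1) * (β + (n:ℝ) + ((j+1:ℕ):ℝ)) ^ k /
              ((Nat.factorial (j+1) : ℝ) * (Nat.factorial (k - (j+1)) : ℝ)) * s (n + (j+1))) := by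
        simp only [Finset.mul_sum, Finset.sum_mul, ← Finset.sum_sub_distrib]
        exact Finset.sum_congr rfl hkey
      -- boundary term at j = k+1
      have h1 : (-1:ℝ)^(k+1) * ((-1:ℝ)^(k+1) * (β + (n:ℝ) + ((k+1:ℕ):ℝ)) ^ (k+1) /
            ((Nat.factorial (k+1) : ℝ) * (Nat.factorial (k + 1 - (k+1)) : ℝ)) * s (n + (k+1)))
            * ((k:ℝ) + 1)
          = (β + (n:ℝ) + (k:ℝ) + 1) * ((-1:ℝ)^k * ((-1:ℝ)^k * (β + ((n+1:ℕ):ℝ) + (k:ℝ)) ^ k /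
              ((Nat.factorial k : ℝ) * (Nat.factorial (k - k) : ℝ)) * s (n + 1 + k))) := by
        have e1 : n + (k + 1) = n + 1 + k := by omega
        rw [e1, Nat.sub_self, Nat.sub_self]
        have f1 : ((Nat.factorial k : ℕ):ℝ) ≠ 0 := Nat.cast_ne_zero.mpr (Nat.factorial_ne_zero k)
        simp only [Nat.factorial_succ, Nat.factorial_zero]
        push_cast
        field_simp
        ring
      -- boundary term at j = 0
      have h2 : (-1:ℝ)^(k+1) * ((-1:ℝ)^0 * (β + (n:ℝ) + ((0:ℕ):ℝ)) ^ (k+1) /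
            ((Nat.factorial 0 : ℝ) * (Nat.factorial (k + 1 - 0) : ℝ)) * s (n + 0))
            * ((k:ℝ) + 1)
          = - ((β + (n:ℝ)) * ((-1:ℝ)^k * ((-1:ℝ)^0 * (β + (n:ℝ) + ((0:ℕ):ℝ)) ^ k /
              ((Nat.factorial 0 : ℝ) * (Nat.factorial (k - 0) : ℝ)) * s (n + 0)))) := by
        rw [Nat.sub_zero, Nat.sub_zero]
        have f1 : ((Nat.factorial k : ℕ):ℝ) ≠ 0 := Nat.cast_ne_zero.mpr (Nat.factorial_ne_zero k)
        simp only [Nat.factorial_succ, Nat.factorial_zero]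
        push_cast
        field_simp
        ring
      linear_combination -hR - h1 - h2
end

section
/- Let β > 0, k ≥ 1, s ∈ ℝ, and c_1, …, c_k ∈ ℝ, and define s_n = s + Σ_{j=1}^k c_j·(n+β)^{−j}. Then the standard form of Richardson extrapolation is exact for this sequence: Λ_k^{(n)}(β, s_n) = s for all n ≥ 0. -/
/-!
Multiplying by `(β + n + j) ^ k` turns `s (n + j)` into the value at `x = β + n + j` of the
polynomial `s x^k + Σ_{i=1}^k c_i x^(k-i)`, and `k! · Λ_k⁽ⁿ⁾` is exactly the `k`-th forward
difference (unit step) of that polynomial at `x = β + n`. The `k`-th difference annihilates the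
terms of degree `< k` and sends `x^k` to the constant `k!`, leaving `k! · s`.
-/

/-- The standard form of Richardson extrapolation with shift parameter `β`:
`Λ_k⁽ⁿ⁾(β, sₙ) = (-1)^k Σ_{j=0}^k (-1)^j (β+n+j)^k / (j!(k-j)!) · s_{n+j}`. -/
noncomputable def lambdaRich (β : ℝ) (s : ℕ → ℝ) (k n : ℕ) : ℝ :=
  (-1 : ℝ) ^ k * ∑ j ∈ Finset.range (k + 1),
    (-1 : ℝ) ^ j * (β + n + j) ^ k /
      ((Nat.factorial j : ℝ) * (Nat.factorial (k - j) : ℝ)) * s (n + j)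

open Finset Nat Function fwdDiff

theorem fwdDiff_iter_mul_pow_add_sum_pow_sub {R : Type*} [CommRing R] (s : R) (c : ℕ → R)
    (k : ℕ) :
    Δ_[1] ^[k] (fun r : R ↦ s * r ^ k + ∑ i ∈ Icc 1 k, c i * r ^ (k - i)) =
      s • (k ! : R → R) := by
  have hsplit : (fun r : R ↦ s * r ^ k + ∑ i ∈ Icc 1 k, c i * r ^ (k - i)) =
      s • (fun r : R ↦ r ^ k) + ∑ i ∈ Icc 1 k, c i • fun r : R ↦ r ^ (k - i) := by
    ext r; simp
  have hlower : ∀ i ∈ Icc 1 k, Δ_[1] ^[k] (c i • fun r : R ↦ r ^ (k - i)) = 0 := fun i hi ↦ by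
    rw [fwdDiff_iter_const_smul, fwdDiff_iter_pow_eq_zero_of_lt (by grind), smul_zero]
  rw [hsplit, fwdDiff_iter_add, fwdDiff_iter_finsetSum, sum_eq_zero hlower, add_zero,
    fwdDiff_iter_const_smul, fwdDiff_iter_eq_factorial]

theorem pow_mul_add_sum_zpow_neg {K : Type*} [Field K] {x : K} (hx : x ≠ 0) (s : K)
    (c : ℕ → K) (k : ℕ) :
    x ^ k * (s + ∑ i ∈ Icc 1 k, c i * x ^ (-(i : ℤ))) =
      s * x ^ k + ∑ i ∈ Icc 1 k, c i * x ^ (k - i) := by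
  rw [mul_add, mul_sum, mul_comm]
  congr 1
  refine sum_congr rfl fun i hi ↦ ?_
  rw [mul_left_comm, ← zpow_natCast, ← zpow_add₀ hx, ← zpow_natCast,
    Nat.cast_sub (mem_Icc.1 hi).2]
  ring_nf

theorem factorial_mul_lambdaRich_eq_fwdDiff_iter (β : ℝ) (s : ℕ → ℝ) (k n : ℕ) (f : ℝ → ℝ)
    (hf : ∀ j ≤ k, f (β + n + j) = (β + n + j) ^ k * s (n + j)) :
    k ! * lambdaRich β s k n = Δ_[1] ^[k] f (β + n) := by
  rw [fwdDiff_iter_eq_sum_shift, lambdaRich, ← mul_assoc, mul_sum]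
  refine sum_congr rfl fun j hj ↦ ?_
  have hjk : j ≤ k := Nat.lt_succ_iff.1 (mem_range.1 hj)
  rw [nsmul_one, hf j hjk, zsmul_eq_mul, Int.cast_mul, Int.cast_pow, Int.cast_neg, Int.cast_one,
    Int.cast_natCast, Nat.cast_choose ℝ hjk, pow_sub₀ _ (by norm_num) hjk,
    div_eq_mul_inv, ← inv_pow, inv_neg_one]
  field_simp

theorem lambdaRich_exact_general (β : ℝ) (hβ : 0 < β) (k : ℕ)
    (s : ℝ) (c : ℕ → ℝ) (sn : ℕ → ℝ)
    (hsn : ∀ n : ℕ, sn n = s + ∑ j ∈ Finset.Icc 1 k, c j * ((n : ℝ) + β) ^ (-(j : ℤ))) :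
    ∀ n : ℕ, lambdaRich β sn k n = s := by
  intro n
  have hvalues : ∀ j ≤ k, s * (β + n + j) ^ k + ∑ i ∈ Icc 1 k, c i * (β + n + j) ^ (k - i) =
      (β + n + j) ^ k * sn (n + j) := fun j _ ↦ by
    have hcast : ((n + j : ℕ) : ℝ) + β = β + n + j := by push_cast; ring
    rw [hsn, hcast, pow_mul_add_sum_zpow_neg (by positivity)]
  have hk! : (k ! : ℝ) ≠ 0 := by positivity
  rw [← mul_right_inj' hk!, factorial_mul_lambdaRich_eq_fwdDiff_iter β sn k n
      (fun r ↦ s * r ^ k + ∑ i ∈ Icc 1 k, c i * r ^ (k - i)) hvalues,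
    fwdDiff_iter_mul_pow_add_sum_pow_sub, Pi.smul_apply, Pi.natCast_apply, smul_eq_mul, mul_comm]

/-- the standard form of Richardson extrapolation is exact for
sequences of the form `sₙ = s + Σ_{j=1}^k cⱼ·(n+β)^{-j}`: `Λ_k⁽ⁿ⁾(β, sₙ) = s`. -/
theorem lambdaRich_exact (β : ℝ) (hβ : 0 < β) (k : ℕ) (hk : 1 ≤ k)
    (s : ℝ) (c : ℕ → ℝ) (sn : ℕ → ℝ)
    (hsn : ∀ n : ℕ, sn n = s + ∑ j ∈ Finset.Icc 1 k, c j * ((n : ℝ) + β) ^ (-(j : ℤ))) :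
    ∀ n : ℕ, lambdaRich β sn k n = s :=
  lambdaRich_exact_general β hβ k s c sn hsn
end

section
/- Let ζ > 0, k ≥ 1, s ∈ ℝ, c_0, …, c_{k−1} ∈ ℝ, let (ω_n) be a sequence of nonzero real numbers, and define s_n = s + ω_n·Σ_{j=0}^{k−1} c_j·(n+ζ)^{−j}. Then for every n such that Σ_{j=0}^k (−1)^j C(k,j) ((ζ+n+j)^{k−1}/(ζ+n+k)^{k−1}) / ω_{n+j} ≠ 0, Levin's sequence transformation is exact: L_k^{(n)}(ζ, s_n, ω_n) = s. -/
lemma alt_sum_choose_pow : ∀ m : ℕ, ∀ k : ℕ, m < k → ∀ x : ℝ,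
    ∑ j ∈ Finset.range (k + 1), (-1 : ℝ) ^ j * (Nat.choose k j : ℝ) * (x + j) ^ m = 0 := by
  intro m
  induction m using Nat.strong_induction_on with
  | _ m ih =>
    intro k hk x
    obtain ⟨k', rfl⟩ : ∃ k', k = k' + 1 := ⟨k - 1, by omega⟩
    have hA : ∀ y : ℝ, ∑ j ∈ Finset.range (k' + 1), (-1 : ℝ) ^ j * (Nat.choose k' j : ℝ) * (y + j) ^ m
        = (∑ j ∈ Finset.range (k' + 1), (-1 : ℝ) ^ (j+1) * (Nat.choose k' (j+1) : ℝ) * (y + (j+1)) ^ m) + y ^ m := by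
      intro y
      rw [Finset.sum_range_succ'        ]
      rw [Finset.sum_range_succ]
      simp [Nat.choose_succ_self]
    -- pascal split
    have key : ∑ j ∈ Finset.range (k' + 2), (-1 : ℝ) ^ j * (Nat.choose (k'+1) j : ℝ) * (x + j) ^ m
        = (∑ j ∈ Finset.range (k' + 1), (-1 : ℝ) ^ j * (Nat.choose k' j : ℝ) * (x + j) ^ m)
        - (∑ j ∈ Finset.range (k' + 1), (-1 : ℝ) ^ j * (Nat.choose k' j : ℝ) * ((x+1) + j) ^ m) := by
      rw [Finset.sum_range_succ' (fun j => (-1 : ℝ) ^ j * (Nat.choose (k'+1) j : ℝ) * (x + j) ^ m)]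
      rw [hA x]
      have : ∀ j, (Nat.choose (k'+1) (j+1) : ℝ) = (Nat.choose k' j : ℝ) + (Nat.choose k' (j+1) : ℝ) := by
        intro j; rw [Nat.choose_succ_succ]; push_cast; ring
      rw [Finset.sum_congr rfl (fun j _ => by rw [this j]; push_cast; ring : ∀ j ∈ Finset.range (k'+1),
        (-1 : ℝ) ^ (j+1) * (Nat.choose (k'+1) (j+1) : ℝ) * (x + ↑(j+1)) ^ m
        = ((-1 : ℝ) ^ (j+1) * (Nat.choose k' (j+1) : ℝ) * (x + (j+1)) ^ m)
          + (-((-1:ℝ)^j * (Nat.choose k' j : ℝ) * ((x+1) + j)^m)))]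
      rw [Finset.sum_add_distrib, Finset.sum_neg_distrib]
      simp only [Nat.choose_zero_right, Nat.cast_one, one_mul, add_zero]
      ring
    rw [key, ← Finset.sum_sub_distrib]
    have hbin : ∀ j : ℕ, ((x+1) + (j:ℝ))^m = ∑ i ∈ Finset.range (m+1), (Nat.choose m i : ℝ) * (x + (j:ℝ))^i := by
      intro j
      have h := add_pow (x + (j:ℝ)) 1 m
      simp only [one_pow, mul_one] at h
      rw [show (x+1)+(j:ℝ) = (x+(j:ℝ))+1 by ring, h]
      exact Finset.sum_congr rfl (fun i _ => by ring)
    have step : ∀ j ∈ Finset.range (k'+1),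
        (-1:ℝ)^j * (Nat.choose k' j : ℝ) * (x+(j:ℝ))^m - (-1:ℝ)^j * (Nat.choose k' j : ℝ) * ((x+1)+(j:ℝ))^m
        = ∑ i ∈ Finset.range m, -((Nat.choose m i : ℝ) * ((-1:ℝ)^j * (Nat.choose k' j : ℝ) * (x+(j:ℝ))^i)) := by
      intro j _
      rw [hbin j, Finset.sum_range_succ, Nat.choose_self, Nat.cast_one, one_mul,
        Finset.sum_neg_distrib, mul_add, Finset.mul_sum,
        Finset.sum_congr rfl (fun i _ => by ring :
          ∀ i ∈ Finset.range m, (-1:ℝ)^j * (Nat.choose k' j:ℝ) * ((Nat.choose m i:ℝ) * (x+(j:ℝ))^i)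
            = (Nat.choose m i : ℝ) * ((-1:ℝ)^j * (Nat.choose k' j : ℝ) * (x+(j:ℝ))^i))]
      ring
    rw [Finset.sum_congr rfl step, Finset.sum_comm]
    refine Finset.sum_eq_zero (fun i hi => ?_)
    rw [Finset.sum_neg_distrib, neg_eq_zero, ← Finset.mul_sum,
      ih i (Finset.mem_range.mp hi) k' (by have := Finset.mem_range.mp hi; omega) x, mul_zero]

/-- Levin's sequence transformation
`L_k⁽ⁿ⁾(ζ, sₙ, ωₙ) = [Σⱼ (-1)ʲ C(k,j) ((ζ+n+j)^{k-1}/(ζ+n+k)^{k-1}) s_{n+j}/ω_{n+j}] /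
[Σⱼ (-1)ʲ C(k,j) ((ζ+n+j)^{k-1}/(ζ+n+k)^{k-1}) / ω_{n+j}]`
is exact for the model sequence `sₙ = s + ωₙ·Σ_{j=0}^{k-1} cⱼ (n+ζ)^{-j}`,
at every `n` where the denominator sum is nonzero. -/
theorem levin_transformation_exact
    (ζ : ℝ) (hζ : 0 < ζ) (k : ℕ) (hk : 1 ≤ k)
    (s : ℝ) (c : ℕ → ℝ) (ω : ℕ → ℝ) (hω : ∀ n : ℕ, ω n ≠ 0)
    (sn : ℕ → ℝ)
    (hsn : ∀ n : ℕ, sn n = s + ω n *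
      ∑ j ∈ Finset.range k, c j * ((n : ℝ) + ζ) ^ (-(j : ℤ))) :
    ∀ n : ℕ,
      (∑ j ∈ Finset.range (k + 1), (-1 : ℝ) ^ j * (Nat.choose k j : ℝ) *
        ((ζ + n + j) ^ (k - 1) / (ζ + n + k) ^ (k - 1)) / ω (n + j)) ≠ 0 →
      (∑ j ∈ Finset.range (k + 1), (-1 : ℝ) ^ j * (Nat.choose k j : ℝ) *
        ((ζ + n + j) ^ (k - 1) / (ζ + n + k) ^ (k - 1)) * (sn (n + j) / ω (n + j))) /
      (∑ j ∈ Finset.range (k + 1), (-1 : ℝ) ^ j * (Nat.choose k j : ℝ) *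
        ((ζ + n + j) ^ (k - 1) / (ζ + n + k) ^ (k - 1)) / ω (n + j)) = s := by
  intro n hden
  rw [div_eq_iff hden, Finset.mul_sum]
  have hT : ∀ j : ℕ, sn (n + j) / ω (n + j)
      = s / ω (n + j) + ∑ i ∈ Finset.range k, c i * (((n + j : ℕ) : ℝ) + ζ) ^ (-(i : ℤ)) := by
    intro j
    rw [hsn (n + j), add_div, mul_comm, mul_div_assoc, div_self (hω _), mul_one]
  have split : ∀ j ∈ Finset.range (k + 1),
      (-1 : ℝ) ^ j * (Nat.choose k j : ℝ) *
        ((ζ + n + j) ^ (k - 1) / (ζ + n + k) ^ (k - 1)) * (sn (n + j) / ω (n + j))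
      = ((-1 : ℝ) ^ j * (Nat.choose k j : ℝ) *
          ((ζ + n + j) ^ (k - 1) / (ζ + n + k) ^ (k - 1)) / ω (n + j)) * s
        + ∑ i ∈ Finset.range k, (c i / (ζ + n + k) ^ (k - 1)) *
            ((-1 : ℝ) ^ j * (Nat.choose k j : ℝ) * (ζ + n + j) ^ (k - 1 - i)) := by
    intro j _
    rw [hT j, mul_add, Finset.mul_sum]
    congr 1
    · ring
    refine Finset.sum_congr rfl (fun i hi => ?_)
    have hy : (0:ℝ) < ζ + n + j := by positivity
    have hcast : (((n + j : ℕ) : ℝ) + ζ) = ζ + n + j := by push_cast; ring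
    rw [hcast]
    have hpow : (ζ + (n:ℝ) + j) ^ (k - 1) * (ζ + n + j) ^ (-(i : ℤ)) = (ζ + n + j) ^ (k - 1 - i) := by
      rw [← zpow_natCast (ζ + (n:ℝ) + j) (k - 1), ← zpow_natCast (ζ + (n:ℝ) + j) (k - 1 - i),
        ← zpow_add₀ hy.ne']
      congr 1
      have := Finset.mem_range.mp hi
      omega
    rw [show (-1 : ℝ) ^ j * (Nat.choose k j : ℝ) *
        ((ζ + n + j) ^ (k - 1) / (ζ + n + k) ^ (k - 1)) * (c i * (ζ + n + j) ^ (-(i : ℤ)))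
      = (c i / (ζ + n + k) ^ (k - 1)) *
          ((-1 : ℝ) ^ j * (Nat.choose k j : ℝ) *
            ((ζ + n + j) ^ (k - 1) * (ζ + n + j) ^ (-(i : ℤ)))) from by ring, hpow]
  rw [Finset.sum_congr rfl split, Finset.sum_add_distrib]
  have h2 : ∑ j ∈ Finset.range (k + 1), ∑ i ∈ Finset.range k,
      (c i / (ζ + n + k) ^ (k - 1)) *
        ((-1 : ℝ) ^ j * (Nat.choose k j : ℝ) * (ζ + (n:ℝ) + j) ^ (k - 1 - i)) = 0 := by
    rw [Finset.sum_comm]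
    refine Finset.sum_eq_zero fun i hi => ?_
    rw [← Finset.mul_sum,
      alt_sum_choose_pow (k - 1 - i) k (by have := Finset.mem_range.mp hi; omega) (ζ + n),
      mul_zero]
  rw [h2, add_zero]
  exact Finset.sum_congr rfl (fun j _ => by ring)
end

section
/- Let ζ > 0, k ≥ 1, s ∈ ℝ, c_0, …, c_{k−1} ∈ ℝ, let (ω_n) be a sequence of nonzero real numbers, and define s_n = s + ω_n·Σ_{j=0}^{k−1} c_j/( (n+ζ)_j ), where (x)_m = x(x+1)⋯(x+m−1) is the Pochhammer symbol (with (x)_0 = 1). Then for every n such that Σ_{j=0}^k (−1)^j C(k,j) ((ζ+n+j)_{k−1}/(ζ+n+k)_{k−1}) / ω_{n+j} ≠ 0, the factorial-series transformation is exact: S_k^{(n)}(ζ, s_n, ω_n) = s. -/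
open Polynomial Finset

/-!
Since `(x)_{k-1} / (x)_m = (x + m)_{k-1-m}` for `m < k`, multiplying `s_{n+j} / ω_{n+j}` by
`(ζ+n+j)_{k-1}` gives `s (ζ+n+j)_{k-1} / ω_{n+j}` plus `Σ_m c_m (ζ+n+j+m)_{k-1-m}`, a polynomial
in `j` of degree `< k`. The weights `(-1)^j C(k,j)` compute a `k`-th forward difference, which
annihilates such polynomials, so the numerator of `S_k⁽ⁿ⁾` is exactly `s` times its denominator.
-/

theorem Polynomial.alternating_sum_choose_mul_eval_add_eq_zero {R : Type*} [CommRing R]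
    {P : R[X]} {k : ℕ} (hP : P.natDegree < k) (x : R) :
    ∑ j ∈ range (k + 1), (-1) ^ j * (k.choose j : R) * P.eval (x + j) = 0 := by
  have h := congrFun (fwdDiff_iter_eq_zero_of_degree_lt hP) x
  rw [fwdDiff_iter_eq_sum_shift, Pi.zero_apply] at h
  rw [← mul_eq_zero_of_right ((-1 : R) ^ k) h, mul_sum]
  refine sum_congr rfl fun j hj => ?_
  have hsign : (-1 : R) ^ j = (-1) ^ k * (-1) ^ (k - j) := by
    rw [← pow_sub_mul_pow (-1 : R) (mem_range_succ_iff.mp hj), mul_right_comm, ← pow_add,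
      ← two_mul, pow_mul, neg_one_sq, one_pow, one_mul]
  simp [hsign, zsmul_eq_mul, mul_assoc]

theorem ascPochhammer_eval_eq_mul_eval_add {S : Type*} [CommSemiring S] {m d : ℕ} (h : m ≤ d)
    (x : S) :
    (ascPochhammer S d).eval x =
      (ascPochhammer S m).eval x * (ascPochhammer S (d - m)).eval (x + m) := by
  rw [← Nat.add_sub_cancel' h, ← ascPochhammer_mul, Nat.add_sub_cancel_left]
  simp [eval_comp]

theorem alternating_sum_choose_mul_ascPochhammer_div_eq_zero {𝕜 : Type*} [Field 𝕜]
    {k m : ℕ} (hm : m < k) {x : 𝕜} (hx : ∀ j ≤ k, (ascPochhammer 𝕜 m).eval (x + j) ≠ 0) :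
    ∑ j ∈ range (k + 1), (-1) ^ j * (k.choose j : 𝕜) *
      ((ascPochhammer 𝕜 (k - 1)).eval (x + j) / (ascPochhammer 𝕜 m).eval (x + j)) = 0 := by
  have hdeg : (ascPochhammer 𝕜 (k - 1 - m)).natDegree < k := by
    rw [ascPochhammer_natDegree]; omega
  rw [← alternating_sum_choose_mul_eval_add_eq_zero hdeg (x + m)]
  refine sum_congr rfl fun j hj => ?_
  rw [ascPochhammer_eval_eq_mul_eval_add (by omega : m ≤ k - 1),
    mul_div_cancel_left₀ _ (hx j (mem_range_succ_iff.mp hj)), add_right_comm]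

theorem alternating_sum_choose_mul_ascPochhammer_mul_sum_div_eq_zero {𝕜 : Type*} [Field 𝕜]
    (k : ℕ) (c : ℕ → 𝕜) {x : 𝕜}
    (hx : ∀ m < k, ∀ j ≤ k, (ascPochhammer 𝕜 m).eval (x + j) ≠ 0) :
    ∑ j ∈ range (k + 1), (-1) ^ j * (k.choose j : 𝕜) * (ascPochhammer 𝕜 (k - 1)).eval (x + j) *
      ∑ m ∈ range k, c m / (ascPochhammer 𝕜 m).eval (x + j) = 0 := by
  simp_rw [mul_sum]
  rw [sum_comm]
  refine sum_eq_zero fun m hm => ?_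
  rw [← mul_zero (c m), ← alternating_sum_choose_mul_ascPochhammer_div_eq_zero
    (mem_range.mp hm) (hx m (mem_range.mp hm)), mul_sum]
  refine sum_congr rfl fun j _ => ?_
  ring

theorem factorial_series_transformation_exact_general
    (ζ : ℝ) (hζ : 0 < ζ) (k : ℕ)
    (s : ℝ) (c : ℕ → ℝ) (ω : ℕ → ℝ) (hω : ∀ n : ℕ, ω n ≠ 0)
    (sn : ℕ → ℝ)
    (hsn : ∀ n : ℕ, sn n = s + ω n *
      ∑ j ∈ Finset.range k, c j / (ascPochhammer ℝ j).eval ((n : ℝ) + ζ)) :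
    ∀ n : ℕ,
      (∑ j ∈ Finset.range (k + 1), (-1 : ℝ) ^ j * (Nat.choose k j : ℝ) *
        ((ascPochhammer ℝ (k - 1)).eval (ζ + n + j) /
          (ascPochhammer ℝ (k - 1)).eval (ζ + n + k)) / ω (n + j)) ≠ 0 →
      (∑ j ∈ Finset.range (k + 1), (-1 : ℝ) ^ j * (Nat.choose k j : ℝ) *
        ((ascPochhammer ℝ (k - 1)).eval (ζ + n + j) /
          (ascPochhammer ℝ (k - 1)).eval (ζ + n + k)) * (sn (n + j) / ω (n + j))) /
      (∑ j ∈ Finset.range (k + 1), (-1 : ℝ) ^ j * (Nat.choose k j : ℝ) *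
        ((ascPochhammer ℝ (k - 1)).eval (ζ + n + j) /
          (ascPochhammer ℝ (k - 1)).eval (ζ + n + k)) / ω (n + j)) = s := by
  intro n hden
  set D := (ascPochhammer ℝ (k - 1)).eval (ζ + n + k)
  have hsplit : ∀ j : ℕ, (-1 : ℝ) ^ j * (k.choose j : ℝ) *
      ((ascPochhammer ℝ (k - 1)).eval (ζ + n + j) / D) * (sn (n + j) / ω (n + j)) =
      s * ((-1 : ℝ) ^ j * (k.choose j : ℝ) *
        ((ascPochhammer ℝ (k - 1)).eval (ζ + n + j) / D) / ω (n + j)) +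
      D⁻¹ * ((-1 : ℝ) ^ j * (k.choose j : ℝ) * (ascPochhammer ℝ (k - 1)).eval (ζ + n + j) *
        ∑ m ∈ range k, c m / (ascPochhammer ℝ m).eval (ζ + n + j)) := by
    intro j
    have hx : ((n + j : ℕ) : ℝ) + ζ = ζ + n + j := by push_cast; ring
    rw [hsn, hx]
    field_simp [hω (n + j)]
  rw [div_eq_iff hden, sum_congr rfl fun j _ => hsplit j, sum_add_distrib, ← mul_sum, ← mul_sum,
    alternating_sum_choose_mul_ascPochhammer_mul_sum_div_eq_zero k c
      fun m _ j _ => (ascPochhammer_pos m _ (by positivity)).ne',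
    mul_zero, add_zero]

/-- the factorial-series transformation
`S_k⁽ⁿ⁾(ζ, sₙ, ωₙ) = [Σⱼ (-1)ʲ C(k,j) ((ζ+n+j)_{k-1}/(ζ+n+k)_{k-1}) s_{n+j}/ω_{n+j}] /
[Σⱼ (-1)ʲ C(k,j) ((ζ+n+j)_{k-1}/(ζ+n+k)_{k-1}) / ω_{n+j}]`
(with `(x)_m` the Pochhammer symbol, `(x)_m = (ascPochhammer ℝ m).eval x`)
is exact for the model sequence `sₙ = s + ωₙ·Σ_{j=0}^{k-1} cⱼ/(n+ζ)_j`,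
at every `n` where the denominator sum is nonzero. -/
theorem factorial_series_transformation_exact
    (ζ : ℝ) (hζ : 0 < ζ) (k : ℕ) (hk : 1 ≤ k)
    (s : ℝ) (c : ℕ → ℝ) (ω : ℕ → ℝ) (hω : ∀ n : ℕ, ω n ≠ 0)
    (sn : ℕ → ℝ)
    (hsn : ∀ n : ℕ, sn n = s + ω n *
      ∑ j ∈ Finset.range k, c j / (ascPochhammer ℝ j).eval ((n : ℝ) + ζ)) :
    ∀ n : ℕ,
      (∑ j ∈ Finset.range (k + 1), (-1 : ℝ) ^ j * (Nat.choose k j : ℝ) *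
        ((ascPochhammer ℝ (k - 1)).eval (ζ + n + j) /
          (ascPochhammer ℝ (k - 1)).eval (ζ + n + k)) / ω (n + j)) ≠ 0 →
      (∑ j ∈ Finset.range (k + 1), (-1 : ℝ) ^ j * (Nat.choose k j : ℝ) *
        ((ascPochhammer ℝ (k - 1)).eval (ζ + n + j) /
          (ascPochhammer ℝ (k - 1)).eval (ζ + n + k)) * (sn (n + j) / ω (n + j))) /
      (∑ j ∈ Finset.range (k + 1), (-1 : ℝ) ^ j * (Nat.choose k j : ℝ) *
        ((ascPochhammer ℝ (k - 1)).eval (ζ + n + j) /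
          (ascPochhammer ℝ (k - 1)).eval (ζ + n + k)) / ω (n + j)) = s :=
  factorial_series_transformation_exact_general ζ hζ k s c ω hω sn hsn
end

section
/- There exists no sequence transformation that accelerates the convergence of all logarithmically convergent real sequences. Precisely: there is no family of functions g_n : ℝ^{n+1} → ℝ (n ≥ 0), defining a transformation T by (Ts)_n = g_n(s_0, s_1, …, s_n), with the property that for every logarithmically convergent real sequence (s_n) with limit L, the transformed sequence ((Ts)_n) converges to L and ((Ts)_n − L)/(s_n − L) → 0 as n → ∞. -/
/-!
Suppose `g` only sends every logarithmically convergent sequence to a sequence with the same limit.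
Continue a positive prefix `p 0, …, p m` by `p m / 2 · (1 + (m + 1)/(n + 1))`: its distance to
`p m / 2` is harmonic, so it converges logarithmically to `p m / 2`. Far out both this sequence and
its transform are close to `p m / 2`, so at some `N > m` the sequence has dropped below `3/4 · p m`
while the transform is at least half of it. Iterating, the prefixes stabilize to a sequence `s`
decreasing geometrically along the chosen indices, hence to `0`, whose successive ratios lie in
`[(n+1)/(n+2), 1]`, so it is logarithmically convergent; but `(Ts)ₙ / sₙ ≥ 1/2` infinitely often.
-/

open Filter Topology

def IsLogConvergent (s : ℕ → ℝ) (L : ℝ) : Prop :=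
  Tendsto s atTop (𝓝 L) ∧ (∀ n, s n ≠ L) ∧
    Tendsto (fun n => (s (n + 1) - L) / (s n - L)) atTop (𝓝 1)

def IsRegularOnLog (g : (n : ℕ) → (Fin (n + 1) → ℝ) → ℝ) : Prop :=
  ∀ s L, IsLogConvergent s L → Tendsto (fun n => g n fun i => s i) atTop (𝓝 L)

theorem tendsto_natCast_add_one_div_add_two :
    Tendsto (fun n : ℕ => ((n : ℝ) + 1) / (n + 2)) atTop (𝓝 1) := by
  refine ((tendsto_natCast_div_add_atTop (1 : ℝ)).comp (tendsto_add_atTop_nat 1)).congr fun n => ?_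
  simp only [Function.comp, Nat.cast_add, Nat.cast_one]
  ring

structure SlowlyDecreasing (s : ℕ → ℝ) : Prop where
  pos : ∀ n, 0 < s n
  succ_le : ∀ n, s (n + 1) ≤ s n
  le_succ : ∀ n, (n + 1) / (n + 2) * s n ≤ s (n + 1)

namespace SlowlyDecreasing

variable {s : ℕ → ℝ}

theorem antitone (hs : SlowlyDecreasing s) : Antitone s :=
  antitone_nat_of_succ_le hs.succ_le

theorem tendsto_succ_div (hs : SlowlyDecreasing s) :
    Tendsto (fun n => s (n + 1) / s n) atTop (𝓝 1) :=
  tendsto_of_tendsto_of_tendsto_of_le_of_le tendsto_natCast_add_one_div_add_two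
    tendsto_const_nhds (fun n => (le_div_iff₀ (hs.pos n)).2 (hs.le_succ n))
    (fun n => (div_le_one (hs.pos n)).2 (hs.succ_le n))

theorem isLogConvergent (hs : SlowlyDecreasing s) (h0 : Tendsto s atTop (𝓝 0)) :
    IsLogConvergent s 0 := by
  simpa only [IsLogConvergent, sub_zero] using ⟨h0, fun n => (hs.pos n).ne', hs.tendsto_succ_div⟩

end SlowlyDecreasing

theorem slowlyDecreasing_const {c : ℝ} (hc : 0 < c) : SlowlyDecreasing fun _ => c where
  pos _ := hc
  succ_le _ := le_rfl
  le_succ n := mul_le_of_le_one_left hc.le ((div_le_one (by positivity)).2 (by linarith))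

noncomputable def extendHarmonic (p : ℕ → ℝ) (m n : ℕ) : ℝ :=
  if n ≤ m then p n else p m / 2 * (1 + (m + 1) / (n + 1))

section extendHarmonic

variable {p : ℕ → ℝ} {m n : ℕ}

theorem extendHarmonic_of_le (h : n ≤ m) : extendHarmonic p m n = p n := if_pos h

theorem extendHarmonic_sub_half (h : m ≤ n) :
    extendHarmonic p m n - p m / 2 = p m / 2 * ((m + 1) / (n + 1)) := by
  rcases h.eq_or_lt with rfl | h
  · rw [extendHarmonic_of_le le_rfl, div_self (by positivity)]
    ring
  · rw [extendHarmonic, if_neg h.not_ge]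
    ring

theorem extendHarmonic_succ_sub_half (h : m ≤ n) :
    extendHarmonic p m (n + 1) - p m / 2 =
      (n + 1) / (n + 2) * (extendHarmonic p m n - p m / 2) := by
  rw [extendHarmonic_sub_half h, extendHarmonic_sub_half (h.trans n.le_succ)]
  field_simp
  push_cast
  ring

theorem half_lt_extendHarmonic (hp : SlowlyDecreasing p) (m n : ℕ) :
    p m / 2 < extendHarmonic p m n := by
  have hc := hp.pos m
  rcases le_total n m with h | h
  · rw [extendHarmonic_of_le h]
    linarith [hp.antitone h]
  · have : 0 < p m / 2 * ((m + 1) / (n + 1)) := by positivity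
    linarith [extendHarmonic_sub_half (p := p) h]

theorem isLogConvergent_extendHarmonic (hp : SlowlyDecreasing p) (m : ℕ) :
    IsLogConvergent (extendHarmonic p m) (p m / 2) := by
  have hne : ∀ n, extendHarmonic p m n - p m / 2 ≠ 0 := fun n =>
    (sub_pos.2 (half_lt_extendHarmonic hp m n)).ne'
  refine ⟨?_, fun n => sub_ne_zero.1 (hne n), ?_⟩
  · rw [← tendsto_sub_nhds_zero_iff]
    have : Tendsto (fun n : ℕ => p m / 2 * ((m + 1) * (1 / ((n : ℝ) + 1)))) atTop (𝓝 0) := by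
      simpa using
        (tendsto_one_div_add_atTop_nhds_zero_nat.const_mul ((m : ℝ) + 1)).const_mul (p m / 2)
    refine this.congr' ?_
    filter_upwards [eventually_ge_atTop m] with n hn
    rw [extendHarmonic_sub_half hn, mul_one_div]
  · refine tendsto_natCast_add_one_div_add_two.congr' ?_
    filter_upwards [eventually_ge_atTop m] with n hn
    rw [extendHarmonic_succ_sub_half hn, mul_div_cancel_right₀ _ (hne n)]

theorem slowlyDecreasing_extendHarmonic (hp : SlowlyDecreasing p) (m : ℕ) :
    SlowlyDecreasing (extendHarmonic p m) := by
  have hL : 0 < p m / 2 := half_pos (hp.pos m)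
  have hr : ∀ n : ℕ, ((n : ℝ) + 1) / (n + 2) ≤ 1 := fun n =>
    (div_le_one (by positivity)).2 (by linarith)
  refine ⟨fun n => hL.trans (half_lt_extendHarmonic hp m n), fun n => ?_, fun n => ?_⟩ <;>
    rcases lt_or_ge n m with hn | hn
  · rw [extendHarmonic_of_le hn.le, extendHarmonic_of_le hn]
    exact hp.succ_le n
  · nlinarith [hr n, half_lt_extendHarmonic hp m n, extendHarmonic_succ_sub_half (p := p) hn]
  · rw [extendHarmonic_of_le hn.le, extendHarmonic_of_le hn]
    exact hp.le_succ n
  · nlinarith [hr n, half_lt_extendHarmonic hp m n, extendHarmonic_succ_sub_half (p := p) hn]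

end extendHarmonic

variable {g : (n : ℕ) → (Fin (n + 1) → ℝ) → ℝ}

theorem exists_extendHarmonic_le_two_mul (hg : IsRegularOnLog g) {p : ℕ → ℝ}
    (hp : SlowlyDecreasing p) (m : ℕ) :
    ∃ N, m < N ∧ extendHarmonic p m N ≤ 3 / 4 * p m ∧
      extendHarmonic p m N ≤ 2 * g N fun i => extendHarmonic p m i := by
  have ht := (isLogConvergent_extendHarmonic hp m).1
  have hc := hp.pos m
  obtain ⟨N, hmN, hsmall, hbig⟩ := ((eventually_gt_atTop m).and
    ((ht.eventually (gt_mem_nhds (by linarith : p m / 2 < 3 / 4 * p m))).and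
      ((ht.div_const 2).eventually_lt (hg _ _ (isLogConvergent_extendHarmonic hp m))
        (by linarith)))).exists
  exact ⟨N, hmN, hsmall.le, by linarith⟩

theorem exists_slowlyDecreasing_chain (hg : IsRegularOnLog g) :
    ∃ (P : ℕ → ℕ → ℝ) (M : ℕ → ℕ), StrictMono M ∧ ∀ k, SlowlyDecreasing (P k) ∧
      (∀ n ≤ M k, P (k + 1) n = P k n) ∧ P (k + 1) (M (k + 1)) ≤ 3 / 4 * P k (M k) ∧
      P (k + 1) (M (k + 1)) ≤ 2 * g (M (k + 1)) fun i => P (k + 1) i := by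
  choose N hN using fun (p : {p // SlowlyDecreasing p}) m =>
    exists_extendHarmonic_le_two_mul hg p.2 m
  let q : ℕ → {p // SlowlyDecreasing p} × ℕ := fun k =>
    Nat.rec (⟨fun _ => 1, slowlyDecreasing_const one_pos⟩, 0)
      (fun _ q => (⟨extendHarmonic q.1 q.2, slowlyDecreasing_extendHarmonic q.1.2 q.2⟩,
        N q.1 q.2)) k
  exact ⟨fun k => (q k).1, fun k => (q k).2, strictMono_nat_of_lt_succ fun k => (hN _ _).1,
    fun k => ⟨(q k).1.2, fun n hn => extendHarmonic_of_le hn, (hN _ _).2⟩⟩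

section Diagonal

variable {α : Type*} {P : ℕ → ℕ → α} {M : ℕ → ℕ}

theorem eq_of_le_of_forall_succ_eq (hM : Monotone M) (hP : ∀ k, ∀ n ≤ M k, P (k + 1) n = P k n)
    {k l n : ℕ} (hkl : k ≤ l) (hn : n ≤ M k) : P l n = P k n := by
  induction l, hkl using Nat.le_induction with
  | base => rfl
  | succ l hkl ih => rw [hP l n (hn.trans (hM hkl)), ih]

theorem diag_eq_of_le (hM : StrictMono M) (hP : ∀ k, ∀ n ≤ M k, P (k + 1) n = P k n)
    {k n : ℕ} (hn : n ≤ M k) : P (n + 1) n = P k n := by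
  rcases le_total k (n + 1) with h | h
  · exact eq_of_le_of_forall_succ_eq hM.monotone hP h hn
  · exact (eq_of_le_of_forall_succ_eq hM.monotone hP h (n.le_succ.trans hM.le_apply)).symm

end Diagonal

theorem exists_slowlyDecreasing_frequently_le_two_mul (hg : IsRegularOnLog g) :
    ∃ s, SlowlyDecreasing s ∧ Tendsto s atTop (𝓝 0) ∧
      ∃ᶠ n in atTop, s n ≤ 2 * g n fun i => s i := by
  obtain ⟨P, M, hM, hP⟩ := exists_slowlyDecreasing_chain hg
  choose hslow hagree hdecay hbig using hP
  have hdiag : ∀ {k n}, n ≤ M k → P (n + 1) n = P k n := diag_eq_of_le hM hagree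
  have hsucc : ∀ n, P (n + 1 + 1) (n + 1) = P (n + 1) (n + 1) := fun n => hdiag hM.le_apply
  have hs : SlowlyDecreasing fun n => P (n + 1) n :=
    { pos := fun n => (hslow _).pos n
      succ_le := fun n => (hsucc n).trans_le ((hslow _).succ_le n)
      le_succ := fun n => ((hslow _).le_succ n).trans_eq (hsucc n).symm }
  refine ⟨_, hs, ?_, frequently_atTop.2 fun k => ⟨M (k + 1), hM.le_apply.trans' k.le_succ, ?_⟩⟩
  · rw [tendsto_iff_tendsto_subseq_of_antitone hs.antitone hM.tendsto_atTop]
    have hgeom : Tendsto (fun k => (3 / 4 : ℝ) ^ k * P 0 (M 0)) atTop (𝓝 0) := by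
      simpa using (tendsto_pow_atTop_nhds_zero_of_lt_one (r := (3 / 4 : ℝ)) (by norm_num)
        (by norm_num)).mul_const _
    refine squeeze_zero (fun k => (hs.pos _).le) (fun k => ?_) hgeom
    simp only [Function.comp, hdiag le_rfl]
    exact le_geom (u := fun k => P k (M k)) (by norm_num) k fun k _ => hdecay k
  · have hprefix : (fun i : Fin (M (k + 1) + 1) => P (i + 1) i) =
        fun i : Fin (M (k + 1) + 1) => P (k + 1) i :=
      funext fun i => hdiag (Nat.lt_succ_iff.1 i.2)
    simp only [hprefix, hdiag le_rfl]
    exact hbig k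

/-- Delahaye–Germain-Bonne: there is no sequence transformation
`(Ts)ₙ = gₙ(s₀, …, sₙ)` that accelerates the convergence of every logarithmically
convergent real sequence, i.e. such that for every sequence `s` with limit `L`
satisfying `sₙ ≠ L` for all `n` and `(s_{n+1} - L)/(sₙ - L) → 1`, the transformed
sequence converges to `L` and `((Ts)ₙ - L)/(sₙ - L) → 0`. -/
theorem no_universal_accelerator_for_logarithmic_convergence :
    ¬ ∃ g : (n : ℕ) → (Fin (n + 1) → ℝ) → ℝ,
      ∀ (s : ℕ → ℝ) (L : ℝ),
        (Tendsto s atTop (nhds L) ∧ (∀ n : ℕ, s n ≠ L) ∧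
            Tendsto (fun n : ℕ => (s (n + 1) - L) / (s n - L)) atTop (nhds 1)) →
          Tendsto (fun n : ℕ => g n (fun i => s i.1)) atTop (nhds L) ∧
            Tendsto (fun n : ℕ => (g n (fun i => s i.1) - L) / (s n - L)) atTop
              (nhds 0) := by
  rintro ⟨g, hg⟩
  obtain ⟨s, hs, hs0, hlarge⟩ :=
    exists_slowlyDecreasing_frequently_le_two_mul fun s L h => (hg s L h).1
  have hsmall := (hg s 0 (hs.isLogConvergent hs0)).2.eventually (gt_mem_nhds one_half_pos)
  obtain ⟨n, hle, hlt⟩ := (hlarge.and_eventually hsmall).exists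
  rw [sub_zero, sub_zero, div_lt_iff₀ (hs.pos n)] at hlt
  linarith
end

section
/- Euler–Maclaurin formula: let M, N ∈ ℤ with M < N, let k ≥ 1, and let g : ℝ → ℝ be 2k-times continuously differentiable on the interval [M, N]. Then Σ_{ν=M}^{N} g(ν) = ∫_M^N g(x) dx + (1/2)(g(M) + g(N)) + Σ_{j=1}^{k} (B_{2j}/(2j)!)·(g^{(2j−1)}(N) − g^{(2j−1)}(M)) + R_k(g), where R_k(g) = −(1/(2k)!)·∫_M^N B_{2k}(x − ⌊x⌋)·g^{(2k)}(x) dx. -/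
/-!
Since `B_{r+1}' = (r+1) B_r`, integrating by parts on a unit interval `[a, a+1]` turns
`∫ B_{r+1}(x-a) g^{(r+1)}(x) dx` into a boundary term minus `(r+1) ∫ B_r(x-a) g^{(r)}(x) dx`.
For `r = 0` the boundary term is the trapezoidal term `(g(a) + g(a+1))/2`; for `r ≥ 1` it is
`B_{r+1} (g^{(r)}(a+1) - g^{(r)}(a))` because `B_{r+1}(1) = B_{r+1}(0)`, and it vanishes for even
`r ≥ 2` because odd Bernoulli numbers vanish. Iterating up to `r = 2k - 1` gives the formula on one
unit interval; on `[ν, ν+1]` one has `x - ν = x - ⌊x⌋` almost everywhere, so the unit-interval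
formulas add up to the formula on `[M, N]`.
-/

open Set MeasureTheory intervalIntegral
open scoped Nat

structure IsDerivChainOn (n : ℕ) (f : ℕ → ℝ → ℝ) (a b : ℝ) : Prop where
  continuousOn : ∀ r ≤ n, ContinuousOn (f r) (Icc a b)
  hasDerivAt : ∀ r < n, ∀ x ∈ Ioo a b, HasDerivAt (f r) (f (r + 1) x) x

namespace IsDerivChainOn

variable {n : ℕ} {f : ℕ → ℝ → ℝ} {a b c d : ℝ}

theorem mono (hf : IsDerivChainOn n f a b) (hac : a ≤ c) (hdb : d ≤ b) :
    IsDerivChainOn n f c d where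
  continuousOn r hr := (hf.continuousOn r hr).mono (Icc_subset_Icc hac hdb)
  hasDerivAt r hr x hx := hf.hasDerivAt r hr x (Ioo_subset_Ioo hac hdb hx)

end IsDerivChainOn

theorem ContDiffOn.isDerivChainOn_iteratedDerivWithin {n : ℕ} {g : ℝ → ℝ} {a b : ℝ}
    (hg : ContDiffOn ℝ n g (Icc a b)) (hab : a < b) :
    IsDerivChainOn n (fun r => iteratedDerivWithin r g (Icc a b)) a b where
  continuousOn r hr :=
    hg.continuousOn_iteratedDerivWithin (by exact_mod_cast hr) (uniqueDiffOn_Icc hab)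
  hasDerivAt r hr x hx := by
    rw [iteratedDerivWithin_succ]
    have hdiff := hg.differentiableOn_iteratedDerivWithin (by exact_mod_cast hr)
      (uniqueDiffOn_Icc hab) x (Ioo_subset_Icc_self hx)
    exact hdiff.hasDerivWithinAt.hasDerivAt (Icc_mem_nhds hx.1 hx.2)

theorem integral_bernoulliFun_sub_mul_deriv (a : ℝ) (r : ℕ) {f f' : ℝ → ℝ}
    (hf : ContinuousOn f (Icc a (a + 1))) (hf' : ContinuousOn f' (Icc a (a + 1)))
    (hff' : ∀ x ∈ Ioo a (a + 1), HasDerivAt f (f' x) x) :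
    ∫ x in a..a + 1, bernoulliFun (r + 1) (x - a) * f' x =
      bernoulliFun (r + 1) 1 * f (a + 1) - bernoulliFun (r + 1) 0 * f a -
        (r + 1) * ∫ x in a..a + 1, bernoulliFun r (x - a) * f x := by
  have hle : a ≤ a + 1 := by linarith
  rw [integral_mul_deriv_eq_deriv_mul_of_hasDerivAt
    (u' := fun x => (r + 1 : ℝ) * bernoulliFun r (x - a)) (v := f)
    (by fun_prop) (by rwa [uIcc_of_le hle])
    (fun x _ => by simpa using ((hasDerivAt_bernoulliFun (r + 1) (x - a)).comp_sub_const x a))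
    (by simpa [min_eq_left hle, max_eq_right hle] using hff')
    (Continuous.intervalIntegrable (by fun_prop) _ _)
    (hf'.intervalIntegrable_of_Icc hle)]
  simp only [mul_assoc, intervalIntegral.integral_const_mul, add_sub_cancel_left, sub_self]

theorem eq_sum_bernoulli_sub_of_recurrence {K D : ℕ → ℝ} {k : ℕ} (hk : 1 ≤ k)
    (hK : ∀ r, 1 ≤ r → r < 2 * k →
      K (r + 1) = (bernoulli (r + 1) : ℝ) / (r + 1)! * D r - K r) :
    K 1 =
      ∑ j ∈ Finset.Icc 1 k, (bernoulli (2 * j) : ℝ) / (2 * j)! * D (2 * j - 1) - K (2 * k) := by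
  induction k, hk using Nat.le_induction with
  | base =>
    simp only [Finset.Icc_self, Finset.sum_singleton]
    linarith [hK 1 le_rfl (by norm_num)]
  | succ m hm ih =>
    have hodd : bernoulli (2 * m + 1) = 0 :=
      bernoulli_eq_zero_of_odd (odd_two_mul_add_one m) (by omega)
    have h₁ := hK (2 * m) (by omega) (by omega)
    have h₂ := hK (2 * m + 1) (by omega) (by omega)
    rw [hodd, Rat.cast_zero, zero_div, zero_mul, zero_sub] at h₁
    rw [Finset.sum_Icc_succ_top (by omega), ih fun r h1 h2 => hK r h1 (by omega),
      show 2 * (m + 1) = 2 * m + 1 + 1 by ring, Nat.add_sub_cancel]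
    linarith

theorem eulerMaclaurin_unit (a : ℝ) {k : ℕ} (hk : 1 ≤ k) {f : ℕ → ℝ → ℝ}
    (hf : IsDerivChainOn (2 * k) f a (a + 1)) :
    1 / 2 * (f 0 a + f 0 (a + 1)) =
      (∫ x in a..a + 1, f 0 x) +
        ∑ j ∈ Finset.Icc 1 k, (bernoulli (2 * j) : ℝ) / (2 * j)! *
          (f (2 * j - 1) (a + 1) - f (2 * j - 1) a) -
        1 / (2 * k)! * ∫ x in a..a + 1, bernoulliFun (2 * k) (x - a) * f (2 * k) x := by
  set K : ℕ → ℝ := fun r => 1 / r ! * ∫ x in a..a + 1, bernoulliFun r (x - a) * f r x with hKdef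
  have ibp r (hr : r < 2 * k) := integral_bernoulliFun_sub_mul_deriv a r
    (hf.continuousOn r hr.le) (hf.continuousOn (r + 1) hr) (hf.hasDerivAt r hr)
  have hK r (h1 : 1 ≤ r) (h2 : r < 2 * k) :
      K (r + 1) = (bernoulli (r + 1) : ℝ) / (r + 1)! * (f r (a + 1) - f r a) - K r := by
    simp only [hKdef]
    rw [ibp r h2, bernoulliFun_endpoints_eq_of_ne_one (by omega), bernoulliFun_eval_zero,
      Nat.factorial_succ]
    push_cast
    field_simp
  have hK₁ : K 1 = 1 / 2 * (f 0 a + f 0 (a + 1)) - ∫ x in a..a + 1, f 0 x := by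
    simp only [hKdef]
    rw [ibp 0 (by omega)]
    simp only [Nat.factorial_one, Nat.cast_one, Nat.cast_zero, bernoulliFun_one, bernoulliFun_zero,
      one_mul, div_one, zero_add]
    ring
  have := eq_sum_bernoulli_sub_of_recurrence hk hK
  simp only [hKdef] at this hK₁
  linarith

theorem integral_comp_fract_unit (m : ℤ) (G : ℝ → ℝ → ℝ) :
    ∫ x in (m : ℝ)..m + 1, G (Int.fract x) x = ∫ x in (m : ℝ)..m + 1, G (x - m) x := by
  refine integral_congr_ae ?_
  filter_upwards [compl_mem_ae_iff.mpr (measure_singleton ((m : ℝ) + 1))] with x hx hxI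
  rw [uIoc_of_le (by linarith)] at hxI
  have hfloor : ⌊x⌋ = m := Int.floor_eq_iff.mpr ⟨hxI.1.le, lt_of_le_of_ne hxI.2 hx⟩
  rw [Int.fract, hfloor]

theorem intervalIntegrable_bernoulliFun_fract_mul (r : ℕ) {u : ℝ → ℝ} {a b : ℝ} (hab : a ≤ b)
    (hu : ContinuousOn u (Icc a b)) :
    IntervalIntegrable (fun x => bernoulliFun r (Int.fract x) * u x) volume a b := by
  obtain ⟨C, hC⟩ := (isCompact_Icc (a := (0 : ℝ)) (b := 1)).exists_bound_of_continuousOn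
    (continuous_bernoulliFun r).continuousOn
  refine intervalIntegrable_iff.mpr ((hu.intervalIntegrable_of_Icc hab).def'.bdd_mul ?_
    (ae_of_all _ fun x => hC _ ⟨Int.fract_nonneg x, (Int.fract_lt_one x).le⟩))
  exact ((continuous_bernoulliFun r).measurable.comp measurable_fract).aestronglyMeasurable

theorem sum_Icc_eq_eulerMaclaurin {M N : ℤ} (hMN : M ≤ N) {k : ℕ} (hk : 1 ≤ k)
    {f : ℕ → ℝ → ℝ} (hf : IsDerivChainOn (2 * k) f M N) :
    ∑ ν ∈ Finset.Icc M N, f 0 ν =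
      (∫ x in (M : ℝ)..N, f 0 x) + 1 / 2 * (f 0 M + f 0 N) +
        ∑ j ∈ Finset.Icc 1 k, (bernoulli (2 * j) : ℝ) / (2 * j)! *
          (f (2 * j - 1) N - f (2 * j - 1) M) +
        -(1 / (2 * k)!) *
          ∫ x in (M : ℝ)..N, bernoulliFun (2 * k) (Int.fract x) * f (2 * k) x := by
  induction N, hMN using Int.leInduction with
  | base =>
    simp only [Finset.Icc_self, Finset.sum_singleton, integral_same, sub_self, mul_zero,
      Finset.sum_const_zero, add_zero, zero_add]
    ring
  | succ L hML ih =>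
    have hML' : (M : ℝ) ≤ L := by exact_mod_cast hML
    have hL : (L : ℝ) ≤ L + 1 := by linarith
    push_cast at hf ⊢
    have hleft := hf.mono le_rfl hL
    have hright := hf.mono hML' le_rfl
    have hunit := eulerMaclaurin_unit (L : ℝ) hk hright
    rw [← integral_comp_fract_unit L (fun t x => bernoulliFun (2 * k) t * f (2 * k) x)] at hunit
    have hS : ∑ ν ∈ Finset.Icc M (L + 1), f 0 ν = ∑ ν ∈ Finset.Icc M L, f 0 ν + f 0 (L + 1) := by
      rw [← Finset.insert_Icc_right_eq_Icc_add_one (by omega), Finset.sum_insert (by simp),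
        add_comm, Int.cast_add, Int.cast_one]
    have hI := integral_add_adjacent_intervals
      ((hleft.continuousOn 0 (by omega)).intervalIntegrable_of_Icc (μ := volume) hML')
      ((hright.continuousOn 0 (by omega)).intervalIntegrable_of_Icc (μ := volume) hL)
    have hR := integral_add_adjacent_intervals
      (intervalIntegrable_bernoulliFun_fract_mul (2 * k) hML' (hleft.continuousOn _ le_rfl))
      (intervalIntegrable_bernoulliFun_fract_mul (2 * k) hL (hright.continuousOn _ le_rfl))
    have hC : ∑ j ∈ Finset.Icc 1 k, (bernoulli (2 * j) : ℝ) / (2 * j)! *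
          (f (2 * j - 1) (L + 1) - f (2 * j - 1) M) =
        ∑ j ∈ Finset.Icc 1 k, (bernoulli (2 * j) : ℝ) / (2 * j)! *
            (f (2 * j - 1) L - f (2 * j - 1) M) +
          ∑ j ∈ Finset.Icc 1 k, (bernoulli (2 * j) : ℝ) / (2 * j)! *
            (f (2 * j - 1) (L + 1) - f (2 * j - 1) L) := by
      rw [← Finset.sum_add_distrib]; congr! 1 with j; ring
    rw [hS, ← hI, ← hR, hC, ih hleft]
    linarith

/-- the Euler–Maclaurin formula. For `M < N` integers, `k ≥ 1`, and
`g` a `2k`-times continuously differentiable function on `[M, N]`: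
`Σ_{ν=M}^N g(ν) = ∫_M^N g + (1/2)(g(M)+g(N))
  + Σ_{j=1}^k (B_{2j}/(2j)!)·(g^{(2j-1)}(N) - g^{(2j-1)}(M)) + R_k(g)`,
with `R_k(g) = -(1/(2k)!)·∫_M^N B_{2k}(x-⌊x⌋)·g^{(2k)}(x) dx`.
Here `B_m(x)` is the Bernoulli polynomial, `B_m = B_m(0)` the Bernoulli number,
and derivatives are taken within `[M, N]`. -/
theorem euler_maclaurin
    (M N : ℤ) (hMN : M < N) (k : ℕ) (hk : 1 ≤ k) (g : ℝ → ℝ)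
    (hg : ContDiffOn ℝ (2 * k) g (Set.Icc (M : ℝ) (N : ℝ))) :
    ∑ ν ∈ Finset.Icc M N, g (ν : ℝ) =
      (∫ x in (M : ℝ)..(N : ℝ), g x) + (1 / 2) * (g (M : ℝ) + g (N : ℝ)) +
        (∑ j ∈ Finset.Icc 1 k,
          (((bernoulli (2 * j) : ℚ) : ℝ) / (Nat.factorial (2 * j) : ℝ)) *
            (iteratedDerivWithin (2 * j - 1) g (Set.Icc (M : ℝ) (N : ℝ)) (N : ℝ) -
              iteratedDerivWithin (2 * j - 1) g (Set.Icc (M : ℝ) (N : ℝ)) (M : ℝ))) +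
        (-(1 / (Nat.factorial (2 * k) : ℝ)) *
          ∫ x in (M : ℝ)..(N : ℝ),
            (Polynomial.eval (x - (⌊x⌋ : ℝ))
                ((Polynomial.bernoulli (2 * k)).map (algebraMap ℚ ℝ))) *
              iteratedDerivWithin (2 * k) g (Set.Icc (M : ℝ) (N : ℝ)) x) := by
  have hg' : ContDiffOn ℝ (2 * k : ℕ) g (Icc (M : ℝ) N) := by exact_mod_cast hg
  have hEM := sum_Icc_eq_eulerMaclaurin hMN.le hk
    (hg'.isDerivChainOn_iteratedDerivWithin (by exact_mod_cast hMN))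
  simp only [iteratedDerivWithin_zero] at hEM
  -- `bernoulliFun r (Int.fract x)` unfolds to `Polynomial.eval (x - ⌊x⌋) _`
  exact hEM
end
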